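/- arXiv:2306.09927 — 5 statements merged into one kernel-verified Lean document; each statement's English description precedes it below -/
import Mathlib

section
/- Let $\Lambda \in \mathbb{R}^{d\times d}$ be symmetric positive definite and $\Gamma = (1+\tfrac{1}{N})\Lambda + \tfrac{1}{N}\operatorname{tr}(\Lambda) I_d$. Then the infimum of $\tilde\ell(U, u) = \operatorname{tr}\big[\tfrac{1}{2} u^2 \Gamma\Lambda U \Lambda U^\top - u \Lambda^2 U^\top\big]$ over $U \in \mathbb{R}^{d\times d}$ and $u \in \mathbb{R}$ is attained and equals $-\tfrac{1}{2}\operatorname{tr}(\Lambda^2 \Gamma^{-1})$. -/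
/-!
Completing the square. The loss is homogeneous in the sense that `ℓ̃(U, u) = ℓ̃(uU, 1)`, and
because `Γ` commutes with `Λ`,
`ℓ̃(V, 1) = ½ tr(ΓΛ W Λ Wᵀ) - ½ tr(Λ²Γ⁻¹)` with `W = V - Γ⁻¹`.
The first term is the trace of a product of the positive semidefinite matrices `ΓΛ` and `WΛWᵀ`,
hence nonnegative, and it vanishes at `V = Γ⁻¹`.
-/

open Matrix

namespace Matrix

open scoped ComplexOrder MatrixOrder in
theorem PosSemidef.trace_mul_nonneg {𝕜 n : Type*} [RCLike 𝕜] [Fintype n]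
    {A B : Matrix n n 𝕜} (hA : A.PosSemidef) (hB : B.PosSemidef) : 0 ≤ (A * B).trace := by
  classical
  obtain ⟨C, rfl⟩ := CStarAlgebra.nonneg_iff_eq_star_mul_self.mp hA.nonneg
  rw [star_eq_conjTranspose, Matrix.mul_assoc, trace_mul_comm, Matrix.mul_assoc,
    ← Matrix.mul_assoc]
  exact (hB.mul_mul_conjTranspose_same C).trace_nonneg

variable {n : Type*} [DecidableEq n] {Λ : Matrix n n ℝ} {a c : ℝ}

lemma PosDef.smul_add_smul_one (hΛ : Λ.PosDef) (ha : 0 < a) (hc : 0 ≤ c) :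
    (a • Λ + c • 1).PosDef :=
  (hΛ.smul ha).add_posSemidef (PosSemidef.one.smul hc)

variable [Fintype n]

lemma commute_smul_add_smul_one (Λ : Matrix n n ℝ) (a c : ℝ) : Commute (a • Λ + c • 1) Λ :=
  ((Commute.refl Λ).smul_left a).add_left ((Commute.one_left Λ).smul_left c)

lemma PosSemidef.smul_add_smul_one_mul_self (hΛ : Λ.PosSemidef) (ha : 0 ≤ a) (hc : 0 ≤ c) :
    ((a • Λ + c • 1) * Λ).PosSemidef := by
  rw [add_mul, smul_mul_assoc, smul_mul_assoc, one_mul, ← sq]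
  exact ((hΛ.pow 2).smul ha).add (hΛ.smul hc)

end Matrix

section Loss

variable {n : Type*} [Fintype n]

noncomputable def loss (Γ Λ U : Matrix n n ℝ) (u : ℝ) : ℝ :=
  ((1/2 * u^2) • (Γ * Λ * U * Λ * Uᵀ) - u • (Λ * Λ * Uᵀ)).trace

lemma loss_eq_loss_smul_one (Γ Λ U : Matrix n n ℝ) (u : ℝ) :
    loss Γ Λ U u = loss Γ Λ (u • U) 1 := by
  simp only [loss, transpose_smul, Matrix.mul_smul, Matrix.smul_mul, trace_sub, trace_smul,
    smul_eq_mul]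
  ring

lemma loss_one_eq_of_commute [DecidableEq n] {Γ Λ : Matrix n n ℝ} (hΛ : Λᵀ = Λ) (hΓ : Γᵀ = Γ)
    (hΓu : IsUnit Γ.det) (hcomm : Commute Γ Λ) (V : Matrix n n ℝ) :
    loss Γ Λ V 1 = 1/2 * (Γ * Λ * (V - Γ⁻¹) * Λ * (V - Γ⁻¹)ᵀ).trace
      - 1/2 * (Λ * Λ * Γ⁻¹).trace := by
  have hconj : Γ * Λ * Γ⁻¹ = Λ := by
    rw [hcomm.eq, Matrix.mul_assoc, mul_nonsing_inv Γ hΓu, mul_one]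
  have hcross : (Γ * Λ * V * Λ * Γ⁻¹).trace = (Λ * Λ * Vᵀ).trace := by
    rw [trace_mul_comm, ← Matrix.mul_assoc, ← Matrix.mul_assoc, ← Matrix.mul_assoc,
      nonsing_inv_mul Γ hΓu, one_mul, ← trace_transpose]
    simp only [transpose_mul, hΛ]
    rw [trace_mul_comm, Matrix.mul_assoc, trace_mul_comm]
  have hexpand : Γ * Λ * (V - Γ⁻¹) * Λ * (V - Γ⁻¹)ᵀ
      = Γ * Λ * V * Λ * Vᵀ - Γ * Λ * V * Λ * Γ⁻¹ - (Λ * Λ * Vᵀ - Λ * Λ * Γ⁻¹) := by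
    rw [transpose_sub, transpose_nonsing_inv, hΓ, mul_sub, Matrix.mul_sub, hconj]
    simp only [sub_mul]
    abel
  rw [hexpand]
  simp only [loss, trace_sub, trace_smul, smul_eq_mul, hcross]
  ring

lemma isLeast_range_loss [DecidableEq n] {Γ Λ : Matrix n n ℝ} (hΛ : Λ.PosSemidef) (hΓ : Γ.PosDef)
    (hcomm : Commute Γ Λ) (hΓΛ : (Γ * Λ).PosSemidef) :
    IsLeast (Set.range fun p : Matrix n n ℝ × ℝ => loss Γ Λ p.1 p.2)
      (-(1/2) * (Λ * Λ * Γ⁻¹).trace) := by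
  have key := loss_one_eq_of_commute (isHermitian_iff_isSymm.mp hΛ.isHermitian)
    (isHermitian_iff_isSymm.mp hΓ.isHermitian) hΓ.det_pos.ne'.isUnit hcomm
  refine ⟨⟨(Γ⁻¹, 1), ?_⟩, ?_⟩
  · simp only [key, sub_self, Matrix.mul_zero, Matrix.zero_mul, trace_zero]
    ring
  · rintro _ ⟨⟨U, u⟩, rfl⟩
    set W := u • U - Γ⁻¹
    have hW : 0 ≤ (Γ * Λ * W * Λ * Wᵀ).trace := by
      simpa only [Matrix.mul_assoc, conjTranspose_eq_transpose_of_trivial] using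
        hΓΛ.trace_mul_nonneg (hΛ.mul_mul_conjTranspose_same W)
    dsimp only
    rw [loss_eq_loss_smul_one, key]
    linarith

end Loss

theorem loss_infimum_general {d : ℕ} (N : ℕ)
    (Λ Γ : Matrix (Fin d) (Fin d) ℝ) (hΛ : Λ.PosDef)
    (hΓdef : Γ = (1 + (N : ℝ)⁻¹) • Λ + ((N : ℝ)⁻¹ * Λ.trace) • (1 : Matrix (Fin d) (Fin d) ℝ)) :
    IsLeast (Set.range fun p : Matrix (Fin d) (Fin d) ℝ × ℝ =>
        ((1/2 * p.2^2) • (Γ * Λ * p.1 * Λ * p.1ᵀ) - p.2 • (Λ * Λ * p.1ᵀ)).trace)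
      (-(1/2) * (Λ * Λ * Γ⁻¹).trace) := by
  have ha : 0 < 1 + (N : ℝ)⁻¹ := by positivity
  have hc : 0 ≤ (N : ℝ)⁻¹ * Λ.trace := mul_nonneg (by positivity) hΛ.posSemidef.trace_nonneg
  subst hΓdef
  exact isLeast_range_loss hΛ.posSemidef (hΛ.smul_add_smul_one ha hc)
    (commute_smul_add_smul_one Λ _ _) (hΛ.posSemidef.smul_add_smul_one_mul_self ha.le hc)

/-- The infimum of `ℓ̃(U,u) = tr[½u²ΓΛUΛUᵀ - uΛ²Uᵀ]` is attained and equals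
`-½ tr(Λ²Γ⁻¹)`. -/
theorem loss_infimum {d : ℕ} (N : ℕ) (hN : 1 ≤ N)
    (Λ Γ : Matrix (Fin d) (Fin d) ℝ) (hΛ : Λ.PosDef)
    (hΓdef : Γ = (1 + (N : ℝ)⁻¹) • Λ + ((N : ℝ)⁻¹ * Λ.trace) • (1 : Matrix (Fin d) (Fin d) ℝ)) :
    IsLeast (Set.range fun p : Matrix (Fin d) (Fin d) ℝ × ℝ =>
        ((1/2 * p.2^2) • (Γ * Λ * p.1 * Λ * p.1ᵀ) - p.2 • (Λ * Λ * p.1ᵀ)).trace)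
      (-(1/2) * (Λ * Λ * Γ⁻¹).trace) :=
  loss_infimum_general N Λ Γ hΛ hΓdef
end

section
/- Let $\Lambda \in \mathbb{R}^{d\times d}$ be symmetric positive definite and $\Gamma = (1+\tfrac{1}{N})\Lambda + \tfrac{1}{N}\operatorname{tr}(\Lambda) I_d$. Any global minimizer $(U, u)$ of $\tilde\ell(U,u) = \operatorname{tr}\big[\tfrac{1}{2} u^2 \Gamma\Lambda U \Lambda U^\top - u\Lambda^2 U^\top\big]$ satisfies $u\, U = \Gamma^{-1}$. -/
/-!
Writing `W = u • U`, the loss depends on `(U, u)` only through `W`, and since `Γ` commutes with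
`Λ`, completing the square around `Γ⁻¹` gives
`ℓ(W) = ℓ(Γ⁻¹) + ½ tr(ΓΛ (W - Γ⁻¹) Λ (W - Γ⁻¹)ᵀ)`.
The remainder is a positive definite quadratic form in `W - Γ⁻¹`, because `ΓΛ` and `Λ` are
positive definite: factoring `ΓΛ = aᴴa` and `Λ = bᴴb` turns it into `‖a (W - Γ⁻¹) bᴴ‖²`.
Comparing with the competitor `(Γ⁻¹, 1)` forces this form to vanish at `u • U - Γ⁻¹`.
-/

open Matrix

namespace Matrix

section PosDef

open scoped MatrixOrder ComplexOrder

variable {n 𝕜 : Type*} [Fintype n] [RCLike 𝕜]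

lemma PosDef.mul_of_commute [DecidableEq n] {A B : Matrix n n 𝕜} (hA : A.PosDef) (hB : B.PosDef)
    (h : Commute A B) : (A * B).PosDef :=
  have hAB : (A * B).PosSemidef :=
    nonneg_iff_posSemidef.mp (h.mul_nonneg hA.posSemidef.nonneg hB.posSemidef.nonneg)
  hAB.posDef_iff_isUnit.mpr (hA.isUnit.mul hB.isUnit)

lemma trace_mul_mul_mul_conjTranspose_of_eq_conjTranspose_mul_self {A B a b : Matrix n n 𝕜}
    (hA : A = aᴴ * a) (hB : B = bᴴ * b) (D : Matrix n n 𝕜) :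
    (A * D * B * Dᴴ).trace = (a * D * bᴴ * (a * D * bᴴ)ᴴ).trace := by
  subst hA hB
  simp only [conjTranspose_mul, conjTranspose_conjTranspose, Matrix.mul_assoc]
  rw [trace_mul_comm aᴴ]
  simp only [Matrix.mul_assoc]

lemma PosSemidef.trace_mul_mul_mul_conjTranspose_nonneg [DecidableEq n] {A B : Matrix n n 𝕜}
    (hA : A.PosSemidef) (hB : B.PosSemidef) (D : Matrix n n 𝕜) : 0 ≤ (A * D * B * Dᴴ).trace := by
  obtain ⟨a, ha⟩ := CStarAlgebra.nonneg_iff_eq_star_mul_self.mp hA.nonneg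
  obtain ⟨b, hb⟩ := CStarAlgebra.nonneg_iff_eq_star_mul_self.mp hB.nonneg
  rw [star_eq_conjTranspose] at ha hb
  rw [trace_mul_mul_mul_conjTranspose_of_eq_conjTranspose_mul_self ha hb]
  exact (posSemidef_self_mul_conjTranspose _).trace_nonneg

lemma PosDef.trace_mul_mul_mul_conjTranspose_eq_zero_iff [DecidableEq n] {A B : Matrix n n 𝕜}
    (hA : A.PosDef) (hB : B.PosDef) {D : Matrix n n 𝕜} :
    (A * D * B * Dᴴ).trace = 0 ↔ D = 0 := by
  refine ⟨fun h => ?_, fun h => by simp [h]⟩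
  obtain ⟨a, ha⟩ := CStarAlgebra.nonneg_iff_eq_star_mul_self.mp hA.posSemidef.nonneg
  obtain ⟨b, hb⟩ := CStarAlgebra.nonneg_iff_eq_star_mul_self.mp hB.posSemidef.nonneg
  rw [star_eq_conjTranspose] at ha hb
  rw [trace_mul_mul_mul_conjTranspose_of_eq_conjTranspose_mul_self ha hb,
    trace_mul_conjTranspose_self_eq_zero_iff] at h
  have hADB : A * D * B = 0 := by
    rw [ha, hb, show aᴴ * a * D * (bᴴ * b) = aᴴ * (a * D * bᴴ) * b by simp only [Matrix.mul_assoc],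
      h, Matrix.mul_zero, Matrix.zero_mul]
  rwa [hB.isUnit.mul_left_eq_zero, hA.isUnit.mul_right_eq_zero] at hADB

end PosDef

end Matrix

section Loss

variable {n : Type*} [Fintype n]

noncomputable def reducedLoss (Γ Λ W : Matrix n n ℝ) : ℝ :=
  1 / 2 * (Γ * Λ * W * Λ * Wᵀ).trace - (Λ * Λ * Wᵀ).trace

lemma trace_loss_eq_reducedLoss (Γ Λ U : Matrix n n ℝ) (u : ℝ) :
    ((1 / 2 * u ^ 2) • (Γ * Λ * U * Λ * Uᵀ) - u • (Λ * Λ * Uᵀ)).trace =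
      reducedLoss Γ Λ (u • U) := by
  simp only [reducedLoss, transpose_smul, Matrix.mul_smul, Matrix.smul_mul, trace_sub, trace_smul,
    smul_eq_mul]
  ring

variable [DecidableEq n]

lemma reducedLoss_inv_add {Γ Λ : Matrix n n ℝ} (hΓ : Γᵀ = Γ) (hΛ : Λᵀ = Λ) (hdet : IsUnit Γ.det)
    (hcomm : Commute Γ Λ) (D : Matrix n n ℝ) :
    reducedLoss Γ Λ (Γ⁻¹ + D) = reducedLoss Γ Λ Γ⁻¹ + 1 / 2 * (Γ * Λ * D * Λ * Dᵀ).trace := by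
  have hΓΛΓinv : Γ * Λ * Γ⁻¹ = Λ := by
    rw [hcomm.eq, Matrix.mul_assoc, mul_nonsing_inv _ hdet, Matrix.mul_one]
  have hcross : (Γ * Λ * D * Λ * Γ⁻¹ᵀ).trace = (Λ * Λ * Dᵀ).trace := by
    rw [transpose_nonsing_inv, hΓ, trace_mul_comm,
      show Γ⁻¹ * (Γ * Λ * D * Λ) = Λ * D * Λ by
        simp only [← Matrix.mul_assoc, nonsing_inv_mul _ hdet, Matrix.one_mul],
      ← trace_transpose (Λ * Λ * Dᵀ), transpose_mul, transpose_mul, hΛ, transpose_transpose,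
      trace_mul_cycle' D, Matrix.mul_assoc]
  simp only [reducedLoss, transpose_add, Matrix.mul_add, Matrix.add_mul, trace_add, hΓΛΓinv,
    hcross]
  ring

end Loss

theorem global_min_eq_inv_general {d : ℕ} (N : ℕ)
    (Λ Γ : Matrix (Fin d) (Fin d) ℝ) (hΛ : Λ.PosDef)
    (hΓdef : Γ = (1 + (N : ℝ)⁻¹) • Λ + ((N : ℝ)⁻¹ * Λ.trace) • (1 : Matrix (Fin d) (Fin d) ℝ))
    (U : Matrix (Fin d) (Fin d) ℝ) (u : ℝ)
    (hmin : ∀ (V : Matrix (Fin d) (Fin d) ℝ) (v : ℝ),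
      ((1/2 * u^2) • (Γ * Λ * U * Λ * Uᵀ) - u • (Λ * Λ * Uᵀ)).trace
        ≤ ((1/2 * v^2) • (Γ * Λ * V * Λ * Vᵀ) - v • (Λ * Λ * Vᵀ)).trace) :
    u • U = Γ⁻¹ := by
  have hΓ : Γ.PosDef := hΓdef ▸ (hΛ.smul (by positivity)).add_posSemidef
    (PosSemidef.one.smul (by positivity [hΛ.posSemidef.trace_nonneg]))
  have hcomm : Commute Γ Λ := hΓdef ▸ (((Commute.refl Λ).smul_left _).add_left
    ((Commute.one_left Λ).smul_left _))
  have hexpand := reducedLoss_inv_add (isHermitian_iff_isSymm.mp hΓ.isHermitian)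
    (isHermitian_iff_isSymm.mp hΛ.isHermitian) ((isUnit_iff_isUnit_det Γ).mp hΓ.isUnit) hcomm
    (u • U - Γ⁻¹)
  rw [add_sub_cancel] at hexpand
  have hle := hmin Γ⁻¹ 1
  rw [trace_loss_eq_reducedLoss, trace_loss_eq_reducedLoss, one_smul] at hle
  have hΓΛ : (Γ * Λ).PosDef := hΓ.mul_of_commute hΛ hcomm
  have hnonneg := hΓΛ.posSemidef.trace_mul_mul_mul_conjTranspose_nonneg hΛ.posSemidef (u • U - Γ⁻¹)
  rw [← sub_eq_zero, ← hΓΛ.trace_mul_mul_mul_conjTranspose_eq_zero_iff hΛ]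
  rw [conjTranspose_eq_transpose_of_trivial] at hnonneg ⊢
  linarith

/-- Any global minimizer `(U, u)` of `ℓ̃(U,u) = tr[½u²ΓΛUΛUᵀ - uΛ²Uᵀ]` satisfies
`u U = Γ⁻¹`. -/
theorem global_min_eq_inv {d : ℕ} (N : ℕ) (hN : 1 ≤ N)
    (Λ Γ : Matrix (Fin d) (Fin d) ℝ) (hΛ : Λ.PosDef)
    (hΓdef : Γ = (1 + (N : ℝ)⁻¹) • Λ + ((N : ℝ)⁻¹ * Λ.trace) • (1 : Matrix (Fin d) (Fin d) ℝ))
    (U : Matrix (Fin d) (Fin d) ℝ) (u : ℝ)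
    (hmin : ∀ (V : Matrix (Fin d) (Fin d) ℝ) (v : ℝ),
      ((1/2 * u^2) • (Γ * Λ * U * Λ * Uᵀ) - u • (Λ * Λ * Uᵀ)).trace
        ≤ ((1/2 * v^2) • (Γ * Λ * V * Λ * Vᵀ) - v • (Λ * Λ * Vᵀ)).trace) :
    u • U = Γ⁻¹ :=
  global_min_eq_inv_general N Λ Γ hΛ hΓdef U u hmin
end

section
/- Consider the gradient flow $\frac{d}{dt}U(t) = -u(t)^2\,\Gamma\Lambda\, U(t)\,\Lambda + u(t)\,\Lambda^2$ and $\frac{d}{dt}u(t) = -\operatorname{tr}\big[u(t)\,\Gamma\Lambda\, U(t)\,\Lambda\, U(t)^\top - \Lambda^2 U(t)^\top\big]$ on $\mathbb{R}^{d\times d}\times\mathbb{R}$, where $\Gamma, \Lambda$ are commuting symmetric positive definite matrices. If the initial condition satisfies $u(0)^2 = \operatorname{tr}[U(0) U(0)^\top]$, then for all $t \ge 0$, $u(t)^2 = \operatorname{tr}[U(t) U(t)^\top]$. -/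
/-!
Along a flow of the form `U' = u • N`, `u' = tr (N Uᵀ)` (the gradient flow of any loss of the
product `u • U`, with `N` the negative gradient), both `u²` and `tr (U Uᵀ) = ‖U‖²_F` have
derivative `2 u tr (N Uᵀ)`, so their difference is constant. The flow of the theorem is of this
form with `N = Λ² - u ΓΛUΛ`.
-/

namespace Matrix

variable {m n : Type*} [Fintype m] [Fintype n]

theorem trace_mul_transpose_eq_sum {R : Type*} [NonUnitalNonAssocSemiring R]
    (A B : Matrix m n R) :
    (A * Bᵀ).trace = ∑ i, ∑ j, A i j * B i j := by
  simp [trace, mul_apply]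

theorem hasDerivAt_trace_mul_transpose_self {𝕜 : Type*} [NontriviallyNormedField 𝕜]
    {U : 𝕜 → Matrix m n 𝕜} {U' : Matrix m n 𝕜} {t : 𝕜}
    (hU : ∀ i j, HasDerivAt (fun s => U s i j) (U' i j) t) :
    HasDerivAt (fun s => (U s * (U s)ᵀ).trace) (2 * (U' * (U t)ᵀ).trace) t := by
  have h : HasDerivAt (fun s => ∑ i, ∑ j, U s i j * U s i j)
      (∑ i, ∑ j, (U' i j * U t i j + U t i j * U' i j)) t :=
    HasDerivAt.fun_sum fun i _ => HasDerivAt.fun_sum fun j _ => (hU i j).mul (hU i j)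
  simp only [trace_mul_transpose_eq_sum]
  convert h using 1
  simp only [Finset.mul_sum]
  exact Finset.sum_congr rfl fun i _ => Finset.sum_congr rfl fun j _ => by ring

theorem sq_sub_trace_mul_transpose_eq_of_flow {U N : ℝ → Matrix m n ℝ} {u : ℝ → ℝ}
    (hU : ∀ t i j, HasDerivAt (fun s => U s i j) ((u t • N t) i j) t)
    (hu : ∀ t, HasDerivAt u (N t * (U t)ᵀ).trace t) (t s : ℝ) :
    u t ^ 2 - (U t * (U t)ᵀ).trace = u s ^ 2 - (U s * (U s)ᵀ).trace := by
  have hderiv : ∀ t, HasDerivAt (fun s => u s ^ 2 - (U s * (U s)ᵀ).trace) 0 t := fun t => by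
    refine (((hu t).pow 2).sub (hasDerivAt_trace_mul_transpose_self (hU t))).congr_deriv ?_
    simp only [smul_mul, trace_smul, smul_eq_mul]
    ring
  exact is_const_of_deriv_eq_zero (fun t => (hderiv t).differentiableAt)
    (fun t => (hderiv t).deriv) t s

end Matrix

open Matrix

theorem balancedness_conserved_general {d : ℕ}
    (Λ Γ : Matrix (Fin d) (Fin d) ℝ)
    (U : ℝ → Matrix (Fin d) (Fin d) ℝ) (u : ℝ → ℝ)
    (hU : ∀ t (i j : Fin d), HasDerivAt (fun s => U s i j)
      (((-(u t)^2) • (Γ * Λ * U t * Λ) + (u t) • (Λ * Λ)) i j) t)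
    (hu : ∀ t, HasDerivAt u
      (-(((u t) • (Γ * Λ * U t * Λ * (U t)ᵀ) - Λ * Λ * (U t)ᵀ).trace)) t)
    (hinit : (u 0)^2 = (U 0 * (U 0)ᵀ).trace) :
    ∀ t, 0 ≤ t → (u t)^2 = (U t * (U t)ᵀ).trace := by
  intro t _
  let N t := Λ * Λ - u t • (Γ * Λ * U t * Λ)
  have hN : ∀ t, (-(u t)^2) • (Γ * Λ * U t * Λ) + u t • (Λ * Λ) = u t • N t := fun t => by
    simp only [N, smul_sub, smul_smul, neg_smul, sq]
    abel
  have hU' : ∀ t i j, HasDerivAt (fun s => U s i j) ((u t • N t) i j) t := fun t i j =>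
    hN t ▸ hU t i j
  have hu' : ∀ t, HasDerivAt u (N t * (U t)ᵀ).trace t := fun t => by
    convert hu t using 1
    simp only [N, sub_mul, smul_mul, trace_sub, trace_smul]
    ring
  have := sq_sub_trace_mul_transpose_eq_of_flow hU' hu' t 0
  linarith

/-- The balancedness quantity `u(t)² - tr[U(t)U(t)ᵀ]` is conserved along the gradient flow
`U' = -u²ΓΛUΛ + uΛ²`, `u' = -tr[uΓΛUΛUᵀ - Λ²Uᵀ]`. -/
theorem balancedness_conserved {d : ℕ}
    (Λ Γ : Matrix (Fin d) (Fin d) ℝ) (hΛ : Λ.PosDef) (hΓ : Γ.PosDef)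
    (hcomm : Γ * Λ = Λ * Γ)
    (U : ℝ → Matrix (Fin d) (Fin d) ℝ) (u : ℝ → ℝ)
    (hU : ∀ t (i j : Fin d), HasDerivAt (fun s => U s i j)
      (((-(u t)^2) • (Γ * Λ * U t * Λ) + (u t) • (Λ * Λ)) i j) t)
    (hu : ∀ t, HasDerivAt u
      (-(((u t) • (Γ * Λ * U t * Λ * (U t)ᵀ) - Λ * Λ * (U t)ᵀ).trace)) t)
    (hinit : (u 0)^2 = (U 0 * (U 0)ᵀ).trace) :
    ∀ t, 0 ≤ t → (u t)^2 = (U t * (U t)ᵀ).trace :=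
  balancedness_conserved_general Λ Γ U u hU hu hinit
end

section
/- Let $\sigma > 0$, let $\Theta \in \mathbb{R}^{d\times d}$ with $\|\Theta\Theta^\top\|_F = 1$ and $\Lambda\Theta \neq 0$, where $\Lambda$ is symmetric positive definite, and let $\Gamma$ be symmetric positive definite and commuting with $\Lambda$. If $\sigma^2 < \frac{2}{\sqrt{d}\,\|\Gamma\|_{op}}$, then $\tilde\ell(\sigma\Theta\Theta^\top, \sigma) < 0$, where $\tilde\ell(U,u) = \operatorname{tr}\big[\tfrac{1}{2}u^2\Gamma\Lambda U\Lambda U^\top - u\Lambda^2 U^\top\big]$. -/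
/-!
Write `M = ΘΘᵀ` and let `‖·‖` be the Frobenius norm. At `(σM, σ)` the loss equals
`σ² (σ²/2 · tr(Γ(ΛM)(ΛM)) - tr(Λ²M))`, and `tr(Λ²M) = ‖ΛΘ‖² > 0` because `Λ` is symmetric.
Cauchy–Schwarz for the trace inner product together with `‖ΓA‖ ≤ ‖Γ‖_op ‖A‖` gives
`tr(Γ(ΛM)(ΛM)) ≤ ‖Γ‖_op ‖ΛM‖² ≤ ‖Γ‖_op ‖ΛΘ‖² ‖Θ‖²`, and `‖Θ‖² = tr M ≤ √d ‖M‖ = √d`.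
So the bracket is at most `‖ΛΘ‖² (σ² √d ‖Γ‖_op / 2 - 1) < 0`.
-/

open Matrix

/-- Operator (spectral) norm of a real square matrix. -/
noncomputable def matrixOpNorm {d : ℕ} (A : Matrix (Fin d) (Fin d) ℝ) : ℝ :=
  ‖LinearMap.toContinuousLinearMap (Matrix.toEuclideanLin A)‖

attribute [local instance] Matrix.frobeniusNormedAddCommGroup

theorem matrixOpNorm_nonneg {d : ℕ} (A : Matrix (Fin d) (Fin d) ℝ) : 0 ≤ matrixOpNorm A :=
  norm_nonneg _

theorem PiLp.norm_le_mul_norm_of_forall_le {ι : Type*} [Fintype ι] {E F : ι → Type*}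
    [∀ i, SeminormedAddCommGroup (E i)] [∀ i, SeminormedAddCommGroup (F i)]
    {x : PiLp 2 E} {y : PiLp 2 F} {c : ℝ} (hc : 0 ≤ c) (h : ∀ i, ‖x i‖ ≤ c * ‖y i‖) :
    ‖x‖ ≤ c * ‖y‖ := by
  refine (pow_le_pow_iff_left₀ (norm_nonneg _) (by positivity) two_ne_zero).mp ?_
  rw [mul_pow, PiLp.norm_sq_eq_of_L2, PiLp.norm_sq_eq_of_L2, Finset.mul_sum]
  gcongr with i
  simpa [mul_pow] using pow_le_pow_left₀ (norm_nonneg _) (h i) 2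

namespace Matrix

section Frobenius

variable {m n : Type*} [Fintype m] [Fintype n]

/-- The Frobenius norm is by definition that of the family of rows in `PiLp 2` of
Euclidean spaces, so `tr (A Bᵀ)` is the matching inner product. -/
theorem trace_mul_transpose_eq_inner (A B : Matrix m n ℝ) :
    (A * Bᵀ).trace =
      inner ℝ (WithLp.toLp 2 fun i => WithLp.toLp 2 (A i) : PiLp 2 fun _ : m => EuclideanSpace ℝ n)
        (WithLp.toLp 2 fun i => WithLp.toLp 2 (B i)) := by
  simp [trace, mul_apply, PiLp.inner_apply, mul_comm]

theorem trace_mul_transpose_le (A B : Matrix m n ℝ) : (A * Bᵀ).trace ≤ ‖A‖ * ‖B‖ :=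
  (trace_mul_transpose_eq_inner A B).trans_le (real_inner_le_norm _ _)

theorem trace_mul_transpose_self (A : Matrix m n ℝ) : (A * Aᵀ).trace = ‖A‖ ^ 2 :=
  (trace_mul_transpose_eq_inner A A).trans (real_inner_self_eq_norm_sq _)

theorem trace_le_sqrt_card_mul_frobenius_norm [DecidableEq n] (A : Matrix n n ℝ) :
    A.trace ≤ √(Fintype.card n) * ‖A‖ := by
  have h := trace_mul_transpose_le A 1
  rw [transpose_one, Matrix.mul_one] at h
  have h1 : ‖(1 : Matrix n n ℝ)‖ = √(Fintype.card n) := by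
    simpa using congrArg NNReal.toReal (frobenius_nnnorm_one (n := n) (α := ℝ))
  rw [h1] at h
  linarith

theorem frobenius_norm_sq_le_sqrt_card_mul [DecidableEq m] (A : Matrix m n ℝ) :
    ‖A‖ ^ 2 ≤ √(Fintype.card m) * ‖A * Aᵀ‖ :=
  trace_mul_transpose_self A ▸ trace_le_sqrt_card_mul_frobenius_norm _

end Frobenius

theorem frobenius_norm_mul_le_matrixOpNorm_mul {d : ℕ} {n : Type*} [Fintype n]
    (Γ : Matrix (Fin d) (Fin d) ℝ) (A : Matrix (Fin d) n ℝ) :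
    ‖Γ * A‖ ≤ matrixOpNorm Γ * ‖A‖ := by
  rw [← frobenius_norm_transpose (Γ * A), ← frobenius_norm_transpose A]
  refine PiLp.norm_le_mul_norm_of_forall_le (E := fun _ : n => EuclideanSpace ℝ (Fin d))
    (x := WithLp.toLp 2 fun j => WithLp.toLp 2 ((Γ * A)ᵀ j))
    (y := WithLp.toLp 2 fun j => WithLp.toLp 2 (Aᵀ j)) (norm_nonneg _) fun j => ?_
  simpa [matrixOpNorm, mul_apply_eq_vecMul, vecMul_transpose] using
    (LinearMap.toContinuousLinearMap (toEuclideanLin Γ)).le_opNorm (WithLp.toLp 2 (Aᵀ j))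

theorem trace_mul_mul_self_le {d : ℕ} (Γ A : Matrix (Fin d) (Fin d) ℝ) :
    (Γ * A * A).trace ≤ matrixOpNorm Γ * ‖A‖ ^ 2 :=
  calc (Γ * A * A).trace = (Γ * A * Aᵀᵀ).trace := by rw [transpose_transpose]
    _ ≤ ‖Γ * A‖ * ‖Aᵀ‖ := trace_mul_transpose_le _ _
    _ ≤ matrixOpNorm Γ * ‖A‖ * ‖A‖ := by
      rw [frobenius_norm_transpose]
      gcongr
      exact frobenius_norm_mul_le_matrixOpNorm_mul Γ A
    _ = matrixOpNorm Γ * ‖A‖ ^ 2 := by ring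

theorem trace_mul_mul_gram_le {d : ℕ} {m : Type*} [Fintype m]
    (Γ Λ : Matrix (Fin d) (Fin d) ℝ) (Θ : Matrix (Fin d) m ℝ) :
    (Γ * (Λ * (Θ * Θᵀ)) * (Λ * (Θ * Θᵀ))).trace ≤ matrixOpNorm Γ * ‖Λ * Θ‖ ^ 2 * ‖Θ‖ ^ 2 :=
  calc (Γ * (Λ * (Θ * Θᵀ)) * (Λ * (Θ * Θᵀ))).trace ≤ matrixOpNorm Γ * ‖Λ * (Θ * Θᵀ)‖ ^ 2 :=
        trace_mul_mul_self_le Γ _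
    _ ≤ matrixOpNorm Γ * (‖Λ * Θ‖ * ‖Θ‖) ^ 2 := by
      gcongr
      · exact matrixOpNorm_nonneg Γ
      · simpa [← Matrix.mul_assoc] using frobenius_norm_mul (Λ * Θ) Θᵀ
    _ = matrixOpNorm Γ * ‖Λ * Θ‖ ^ 2 * ‖Θ‖ ^ 2 := by ring

theorem IsSymm.trace_mul_self_mul_mul_transpose {n m : Type*} [Fintype n] [Fintype m]
    {Λ : Matrix n n ℝ} (hΛ : Λ.IsSymm) (Θ : Matrix n m ℝ) :
    (Λ * Λ * (Θ * Θᵀ)).trace = ‖Λ * Θ‖ ^ 2 := by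
  rw [← trace_mul_transpose_self, transpose_mul, hΛ.eq, Matrix.mul_assoc, trace_mul_comm]
  simp only [Matrix.mul_assoc]

end Matrix

noncomputable def lossTilde {n : Type*} [Fintype n] (Γ Λ U : Matrix n n ℝ) (u : ℝ) : ℝ :=
  ((1/2 * u^2) • (Γ * Λ * U * Λ * Uᵀ) - u • (Λ * Λ * Uᵀ)).trace

theorem lossTilde_smul_of_transpose_eq {n : Type*} [Fintype n] (Γ Λ : Matrix n n ℝ)
    {U : Matrix n n ℝ} (hU : Uᵀ = U) (u : ℝ) :
    lossTilde Γ Λ (u • U) u =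
      u ^ 2 * (u ^ 2 / 2 * (Γ * (Λ * U) * (Λ * U)).trace - (Λ * Λ * U).trace) := by
  simp only [lossTilde, transpose_smul, hU, Matrix.mul_smul, Matrix.smul_mul, trace_sub,
    trace_smul, smul_eq_mul, Matrix.mul_assoc]
  ring

theorem init_loss_neg_general {d : ℕ}
    (Λ Γ Θ : Matrix (Fin d) (Fin d) ℝ) (hΛ : Λ.PosDef)
    (hΘnorm : Real.sqrt (((Θ * Θᵀ) * (Θ * Θᵀ)ᵀ).trace) = 1)
    (hΛΘ : Λ * Θ ≠ 0)
    (σ : ℝ) (hσ : 0 < σ)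
    (hσ2 : σ^2 < 2 / (Real.sqrt d * matrixOpNorm Γ)) :
    ((1/2 * σ^2) • (Γ * Λ * (σ • (Θ * Θᵀ)) * Λ * (σ • (Θ * Θᵀ))ᵀ)
      - σ • (Λ * Λ * (σ • (Θ * Θᵀ))ᵀ)).trace < 0 := by
  have hΘ : ‖Θ‖ ^ 2 ≤ √d := by
    rw [trace_mul_transpose_self, Real.sqrt_sq (norm_nonneg _)] at hΘnorm
    simpa [hΘnorm] using frobenius_norm_sq_le_sqrt_card_mul Θ
  have hT1 : (Γ * (Λ * (Θ * Θᵀ)) * (Λ * (Θ * Θᵀ))).trace ≤ matrixOpNorm Γ * ‖Λ * Θ‖ ^ 2 * √d :=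
    (trace_mul_mul_gram_le Γ Λ Θ).trans
      (mul_le_mul_of_nonneg_left hΘ (by have := matrixOpNorm_nonneg Γ; positivity))
  have hσd : σ ^ 2 * (√d * matrixOpNorm Γ) < 2 := by
    have hσ2pos : 0 < σ ^ 2 := by positivity
    rwa [← lt_div_iff₀ ((div_pos_iff_of_pos_left two_pos).mp (hσ2pos.trans hσ2))]
  have hΛΘpos : 0 < ‖Λ * Θ‖ ^ 2 := pow_pos (norm_pos_iff.mpr hΛΘ) 2
  change lossTilde Γ Λ (σ • (Θ * Θᵀ)) σ < 0
  rw [lossTilde_smul_of_transpose_eq Γ Λ (by simp) σ,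
    (isHermitian_iff_isSymm.mp hΛ.1).trace_mul_self_mul_mul_transpose]
  refine mul_neg_of_pos_of_neg (by positivity) ?_
  nlinarith [mul_le_mul_of_nonneg_left hT1 (by positivity : (0 : ℝ) ≤ σ ^ 2 / 2),
    mul_lt_mul_of_pos_right hσd hΛΘpos]

/-- At the balanced initialization `(σΘΘᵀ, σ)` with small enough `σ`, the loss
`ℓ̃(U,u) = tr[½u²ΓΛUΛUᵀ - uΛ²Uᵀ]` is strictly negative. -/
theorem init_loss_neg {d : ℕ}
    (Λ Γ Θ : Matrix (Fin d) (Fin d) ℝ) (hΛ : Λ.PosDef) (hΓ : Γ.PosDef)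
    (hcomm : Γ * Λ = Λ * Γ)
    (hΘnorm : Real.sqrt (((Θ * Θᵀ) * (Θ * Θᵀ)ᵀ).trace) = 1)
    (hΛΘ : Λ * Θ ≠ 0)
    (σ : ℝ) (hσ : 0 < σ)
    (hσ2 : σ^2 < 2 / (Real.sqrt d * matrixOpNorm Γ)) :
    ((1/2 * σ^2) • (Γ * Λ * (σ • (Θ * Θᵀ)) * Λ * (σ • (Θ * Θᵀ))ᵀ)
      - σ • (Λ * Λ * (σ • (Θ * Θᵀ))ᵀ)).trace < 0 :=
  init_loss_neg_general Λ Γ Θ hΛ hΘnorm hΛΘ σ hσ hσ2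
end

section
/- Let $\Lambda$ be symmetric positive definite, $\Gamma = \tfrac{N+1}{N}\Lambda + \tfrac{1}{N}\operatorname{tr}(\Lambda)I_d$, and $\tilde\ell(U,u) = \operatorname{tr}\big[\tfrac{1}{2}u^2\Gamma\Lambda U\Lambda U^\top - u\Lambda^2 U^\top\big]$. For any $(U, u)$ with $u \ge c > 0$, the gradient satisfies $\big\|u^2\Gamma\Lambda U\Lambda - u\Lambda^2\big\|_F^2 \ge \frac{c^2}{\operatorname{tr}(\Gamma^{-1}\Lambda^{-1})\operatorname{tr}(\Lambda^{-1})}\Big(\tilde\ell(U,u) + \tfrac{1}{2}\operatorname{tr}(\Lambda^2\Gamma^{-1})\Big)$. -/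
/-!
Put `M = ΓΛ`, positive definite because `Γ = aΛ + bI` with `a > 0` and `b ≥ 0`, and
`Y = M (uU) Λ - Λ²`, so that the gradient is `uY`. Completing the square gives
`2 (ℓ̃(U, u) + ½ tr(Λ²Γ⁻¹)) = tr(Y Λ⁻¹ Yᵀ M⁻¹)`. Writing `Λ⁻¹ = CᵀC` and `M⁻¹ = DᵀD`, this trace
is `‖D Y Cᵀ‖_F² ≤ ‖D‖_F² ‖Y‖_F² ‖C‖_F² = tr(M⁻¹) tr(Λ⁻¹) ‖Y‖_F²`, and `u² ≥ c²` finishes.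
-/

open Matrix

namespace Matrix

variable {m n : Type*} [Fintype m] [Fintype n]

lemma PosSemidef.exists_eq_transpose_mul_self [DecidableEq n] {A : Matrix n n ℝ}
    (hA : A.PosSemidef) : ∃ C : Matrix n n ℝ, A = Cᵀ * C := by
  open scoped MatrixOrder in
  obtain ⟨C, rfl⟩ := CStarAlgebra.nonneg_iff_eq_star_mul_self.mp hA.nonneg
  exact ⟨C, rfl⟩

section Frobenius

attribute [local instance] frobeniusNormedAddCommGroup

lemma frobenius_norm_sq_eq_trace_mul_transpose (A : Matrix m n ℝ) :
    ‖A‖ ^ 2 = (A * Aᵀ).trace := by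
  rw [frobenius_norm_def, ← Real.rpow_natCast, ← Real.rpow_mul (by positivity)]
  norm_num [trace, mul_apply, sq]

lemma trace_mul_mul_transpose_mul_le [DecidableEq m] [DecidableEq n]
    {A : Matrix n n ℝ} {B : Matrix m m ℝ} (hA : A.PosSemidef) (hB : B.PosSemidef)
    (X : Matrix m n ℝ) :
    (X * A * Xᵀ * B).trace ≤ A.trace * B.trace * (X * Xᵀ).trace := by
  obtain ⟨C, rfl⟩ := hA.exists_eq_transpose_mul_self
  obtain ⟨D, rfl⟩ := hB.exists_eq_transpose_mul_self
  have hsq : (X * (Cᵀ * C) * Xᵀ * (Dᵀ * D)).trace = ‖D * X * Cᵀ‖ ^ 2 := by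
    rw [frobenius_norm_sq_eq_trace_mul_transpose]
    simp only [transpose_mul, transpose_transpose, Matrix.mul_assoc]
    rw [trace_mul_comm D]
    simp only [Matrix.mul_assoc]
  rw [hsq, trace_mul_comm Cᵀ, trace_mul_comm Dᵀ, ← frobenius_norm_sq_eq_trace_mul_transpose,
    ← frobenius_norm_sq_eq_trace_mul_transpose, ← frobenius_norm_sq_eq_trace_mul_transpose]
  calc ‖D * X * Cᵀ‖ ^ 2 ≤ (‖D‖ * ‖X‖ * ‖Cᵀ‖) ^ 2 := by
        gcongr
        exact (frobenius_norm_mul _ _).trans (by gcongr; exact frobenius_norm_mul _ _)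
    _ = ‖C‖ ^ 2 * ‖D‖ ^ 2 * ‖X‖ ^ 2 := by rw [frobenius_norm_transpose]; ring

end Frobenius

section Inverse

variable [DecidableEq n]

lemma trace_complete_square {R : Type*} [CommRing R] {M Λ : Matrix n n R} (hM : M.IsSymm)
    (hΛ : Λ.IsSymm) (hMdet : IsUnit M.det) (hΛdet : IsUnit Λ.det) (B U : Matrix n n R) :
    ((M * U * Λ - B) * Λ⁻¹ * (M * U * Λ - B)ᵀ * M⁻¹).trace
      = (M * U * Λ * Uᵀ).trace - 2 * (B * Uᵀ).trace + (B * Λ⁻¹ * Bᵀ * M⁻¹).trace := by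
  have hcross : (M * (U * (Bᵀ * M⁻¹))).trace = (B * Uᵀ).trace := by
    rw [trace_mul_comm, Matrix.mul_assoc, Matrix.mul_assoc, nonsing_inv_mul _ hMdet,
      Matrix.mul_one, ← trace_transpose, transpose_mul, transpose_transpose]
  simp only [transpose_sub, transpose_mul, hM.eq, hΛ.eq, Matrix.sub_mul, Matrix.mul_sub,
    trace_sub, Matrix.mul_assoc, mul_nonsing_inv_cancel_left _ _ hΛdet,
    nonsing_inv_mul_cancel_left _ _ hΛdet, mul_nonsing_inv _ hMdet, Matrix.mul_one, hcross]
  ring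

lemma PosDef.smul_add_smul_one_mul_self {Λ : Matrix n n ℝ} (hΛ : Λ.PosDef) {a b : ℝ}
    (ha : 0 < a) (hb : 0 ≤ b) : ((a • Λ + b • 1) * Λ).PosDef := by
  have hΛΛ : (Λ * Λ).PosDef := by
    have := PosDef.one.conjTranspose_mul_mul_same (mulVec_injective_iff_isUnit.2 hΛ.isUnit)
    rwa [hΛ.isHermitian.eq, Matrix.mul_one] at this
  rw [Matrix.add_mul, smul_mul, smul_mul, Matrix.one_mul]
  exact (hΛΛ.smul ha).add_posSemidef (hΛ.posSemidef.smul hb)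

lemma two_mul_loss_gap_eq_trace {Γ Λ : Matrix n n ℝ} (hM : (Γ * Λ).PosDef) (hΛ : Λ.PosDef)
    (U : Matrix n n ℝ) (u : ℝ) :
    2 * (((1/2 * u^2) • (Γ * Λ * U * Λ * Uᵀ) - u • (Λ * Λ * Uᵀ)).trace
      + 1/2 * (Λ * Λ * Γ⁻¹).trace)
      = ((Γ * Λ * (u • U) * Λ - Λ * Λ) * Λ⁻¹ * (Γ * Λ * (u • U) * Λ - Λ * Λ)ᵀ
          * (Γ * Λ)⁻¹).trace := by
  have hΛsymm : Λ.IsSymm := isHermitian_iff_isSymm.1 hΛ.isHermitian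
  have hΛdet : IsUnit Λ.det := (isUnit_iff_isUnit_det _).1 hΛ.isUnit
  have hconst : (Λ * Λ * Λ⁻¹ * (Λ * Λ)ᵀ * (Γ * Λ)⁻¹).trace = (Λ * Λ * Γ⁻¹).trace := by
    rw [Matrix.mul_inv_rev, transpose_mul, hΛsymm.eq]
    simp only [Matrix.mul_assoc, mul_nonsing_inv_cancel_left _ _ hΛdet]
  rw [trace_complete_square (isHermitian_iff_isSymm.1 hM.isHermitian) hΛsymm
    ((isUnit_iff_isUnit_det _).1 hM.isUnit) hΛdet]
  simp only [hconst, transpose_smul, smul_mul, Matrix.mul_smul, trace_sub, trace_smul,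
    smul_eq_mul]
  ring

end Inverse

end Matrix

lemma div_mul_le_of_two_mul_le_mul {k S V a b : ℝ} (hk : 0 ≤ k) (hS : 0 ≤ S)
    (hV : 2 * V ≤ k * S) (ha : 0 ≤ a) (hab : a ≤ b) : a / k * V ≤ b * S := by
  rcases hk.eq_or_lt with rfl | hk
  · rw [div_zero, zero_mul]
    exact mul_nonneg (ha.trans hab) hS
  · rw [div_mul_eq_mul_div, div_le_iff₀ hk]
    nlinarith [mul_le_mul_of_nonneg_left hV ha, mul_nonneg (mul_nonneg ha hk.le) hS,
      mul_le_mul_of_nonneg_right hab (mul_nonneg hk.le hS)]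

theorem pl_inequality_general {d : ℕ} (N : ℕ)
    (Λ Γ : Matrix (Fin d) (Fin d) ℝ) (hΛ : Λ.PosDef)
    (hΓdef : Γ = (1 + (N : ℝ)⁻¹) • Λ + ((N : ℝ)⁻¹ * Λ.trace) • (1 : Matrix (Fin d) (Fin d) ℝ))
    (U : Matrix (Fin d) (Fin d) ℝ) (u c : ℝ) (hc : 0 < c) (hu : c ≤ u) :
    (c^2 / ((Γ⁻¹ * Λ⁻¹).trace * (Λ⁻¹).trace)) *
        (((1/2 * u^2) • (Γ * Λ * U * Λ * Uᵀ) - u • (Λ * Λ * Uᵀ)).trace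
          + 1/2 * (Λ * Λ * Γ⁻¹).trace)
      ≤ ((u^2 • (Γ * Λ * U * Λ) - u • (Λ * Λ))
          * (u^2 • (Γ * Λ * U * Λ) - u • (Λ * Λ))ᵀ).trace := by
  have hM : (Γ * Λ).PosDef := hΓdef ▸ hΛ.smul_add_smul_one_mul_self (by positivity)
    (mul_nonneg (by positivity) hΛ.posSemidef.trace_nonneg)
  set Y := Γ * Λ * (u • U) * Λ - Λ * Λ
  have hgrad : u^2 • (Γ * Λ * U * Λ) - u • (Λ * Λ) = u • Y := by
    simp only [Y, smul_sub, Matrix.mul_smul, Matrix.smul_mul, smul_smul, sq]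
  have htr : ((Γ * Λ)⁻¹).trace = (Γ⁻¹ * Λ⁻¹).trace := by
    rw [Matrix.mul_inv_rev, trace_mul_comm]
  have hbound := trace_mul_mul_transpose_mul_le hΛ.inv.posSemidef hM.inv.posSemidef Y
  rw [← two_mul_loss_gap_eq_trace hM hΛ U u, htr] at hbound
  have hS : 0 ≤ (Y * Yᵀ).trace := by
    simpa using (posSemidef_self_mul_conjTranspose Y).trace_nonneg
  have hk : 0 ≤ (Γ⁻¹ * Λ⁻¹).trace * Λ⁻¹.trace :=
    htr ▸ mul_nonneg hM.inv.posSemidef.trace_nonneg hΛ.inv.posSemidef.trace_nonneg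
  rw [hgrad, transpose_smul, smul_mul, Matrix.mul_smul, trace_smul, trace_smul, smul_eq_mul,
    smul_eq_mul]
  calc _ ≤ u ^ 2 * (Y * Yᵀ).trace := div_mul_le_of_two_mul_le_mul hk hS (by linarith)
        (sq_nonneg c) (pow_le_pow_left₀ hc.le hu 2)
    _ = _ := by ring

/-- Polyak–Łojasiewicz-type inequality on the region `u ≥ c > 0`:
`‖u²ΓΛUΛ - uΛ²‖_F² ≥ (c²/(tr(Γ⁻¹Λ⁻¹)tr(Λ⁻¹))) (ℓ̃(U,u) + ½tr(Λ²Γ⁻¹))`. -/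
theorem pl_inequality {d : ℕ} (N : ℕ) (hN : 1 ≤ N)
    (Λ Γ : Matrix (Fin d) (Fin d) ℝ) (hΛ : Λ.PosDef)
    (hΓdef : Γ = (1 + (N : ℝ)⁻¹) • Λ + ((N : ℝ)⁻¹ * Λ.trace) • (1 : Matrix (Fin d) (Fin d) ℝ))
    (U : Matrix (Fin d) (Fin d) ℝ) (u c : ℝ) (hc : 0 < c) (hu : c ≤ u) :
    (c^2 / ((Γ⁻¹ * Λ⁻¹).trace * (Λ⁻¹).trace)) *
        (((1/2 * u^2) • (Γ * Λ * U * Λ * Uᵀ) - u • (Λ * Λ * Uᵀ)).trace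
          + 1/2 * (Λ * Λ * Γ⁻¹).trace)
      ≤ ((u^2 • (Γ * Λ * U * Λ) - u • (Λ * Λ))
          * (u^2 • (Γ * Λ * U * Λ) - u • (Λ * Λ))ᵀ).trace :=
  pl_inequality_general N Λ Γ hΛ hΓdef U u c hc hu
end
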